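/- For all n ≥ 0 and parameters a, b (with denominators nonzero), the closed forms c_{2n} = (a)_n(a−b+3/2)_n/(n!(b−1/2)_n) and c_{2n+1} = (2a/(2b−1))·(a+1)_n(a−b+3/2)_n/(n!(b+1/2)_n) satisfy the three-term recurrence m(m+2b−2)c_m = (m+2(a−1))(m+2(a−b))c_{m−2} + 2(m+a−1)c_{m−1} for every m ≥ 2. -/
import Mathlib
open scoped Nat

noncomputable def poch (a : ℝ) (n : ℕ) : ℝ := (ascPochhammer ℝ n).eval a

noncomputable def F (a b c z : ℝ) : ℝ :=
  ∑' n : ℕ, poch a n * poch b n / (poch c n * (n ! : ℝ)) * z ^ n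

lemma poch_zero (x : ℝ) : poch x 0 = 1 := by simp [poch]

lemma poch_succ (x : ℝ) (n : ℕ) : poch x (n+1) = poch x n * (x + n) := by
  simp [poch, ascPochhammer_succ_right]

lemma poch_succ_left (x : ℝ) (n : ℕ) : poch x (n+1) = x * poch (x+1) n := by
  simp [poch, ascPochhammer_succ_left]

lemma poch_key (x : ℝ) (n : ℕ) : x * poch (x+1) n = poch x n * (x + n) := by
  rw [← poch_succ_left, poch_succ]

lemma poch_ne_zero (x : ℝ) (h : ∀ j : ℕ, x + j ≠ 0) (n : ℕ) : poch x n ≠ 0 := by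
  induction n with
  | zero => simp [poch_zero]
  | succ k ih => rw [poch_succ]; exact mul_ne_zero ih (h k)

lemma tri (K A L B M C d1 d2 d3 : ℝ) (h1 : d1 ≠ 0) (h2 : d2 ≠ 0) (h3 : d3 ≠ 0)
    (h : K * A * (d2 * d3) = L * B * (d1 * d3) + M * C * (d1 * d2)) :
    K * (A / d1) = L * (B / d2) + M * (C / d3) := by
  rw [← mul_div_assoc, ← mul_div_assoc, ← mul_div_assoc,
    div_add_div _ _ h2 h3, div_eq_div_iff h1 (mul_ne_zero h2 h3)]
  linear_combination h

theorem closed_form_satisfies_recurrence_second (a b : ℝ)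
    (hb1 : 2 * b - 1 ≠ 0) (hb2 : 2 * b + 1 ≠ 0)
    (hwell : ∀ m : ℕ, 1 ≤ m → (m : ℝ) * ((m : ℝ) + 2 * b - 2) ≠ 0)
    (c : ℕ → ℝ)
    (hceven : ∀ n : ℕ, c (2 * n) = poch a n * poch (a - b + 3/2) n /
      ((n ! : ℝ) * poch (b - 1/2) n))
    (hcodd : ∀ n : ℕ, c (2 * n + 1) = (2 * a / (2 * b - 1)) *
      (poch (a + 1) n * poch (a - b + 3/2) n / ((n ! : ℝ) * poch (b + 1/2) n))) :
    ∀ m : ℕ, 2 ≤ m →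
      (m : ℝ) * ((m : ℝ) + 2 * b - 2) * c m =
        ((m : ℝ) + 2 * (a - 1)) * ((m : ℝ) + 2 * (a - b)) * c (m - 2)
          + 2 * ((m : ℝ) + a - 1) * c (m - 1) := by
  have hhalf1 : ∀ j : ℕ, b - 1/2 + j ≠ 0 := by
    intro j hj
    have h := hwell (2*j+1) (by omega)
    apply h
    push_cast
    linear_combination (2*(j:ℝ)+1)*2*hj
  have hhalf2 : ∀ j : ℕ, b + 1/2 + j ≠ 0 := by
    intro j hj
    have h := hwell (2*j+3) (by omega)
    apply h
    push_cast
    linear_combination (2*(j:ℝ)+3)*2*hj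
  have hR : ∀ n, poch (b - 1/2) n ≠ 0 := poch_ne_zero _ hhalf1
  have hS : ∀ n, poch (b + 1/2) n ≠ 0 := poch_ne_zero _ hhalf2
  have hbhalf : b - 1/2 ≠ 0 := by have := hhalf1 0; simpa using this
  have hfac : ∀ n : ℕ, (n ! : ℝ) ≠ 0 := fun n => Nat.cast_ne_zero.2 (Nat.factorial_ne_zero n)
  have hn1 : ∀ n : ℕ, ((n:ℝ)+1) ≠ 0 := fun n => by positivity
  have hodd1 : ∀ n : ℕ, c (2*n+1) = 2*(a+n)*(b-1/2)*poch a n*poch (a-b+3/2) n /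
      ((2*b-1)*(n ! : ℝ)*poch (b-1/2) n*(b-1/2+n)) := by
    intro n
    have hSkey := poch_key (b-1/2) n
    rw [show b-1/2+1 = b+1/2 from by ring] at hSkey
    have hka := poch_key a n
    rw [hcodd n, div_mul_div_comm,
      div_eq_div_iff (mul_ne_zero hb1 (mul_ne_zero (hfac n) (hS n)))
        (mul_ne_zero (mul_ne_zero (mul_ne_zero hb1 (hfac n)) (hR n)) (hhalf1 n))]
    linear_combination
      (2*poch (a-b+3/2) n*(2*b-1)*(n ! : ℝ)*(poch (b-1/2) n*(b-1/2+(n:ℝ))))*hka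
      - (2*poch (a-b+3/2) n*(2*b-1)*(n ! : ℝ)*poch a n*(a+(n:ℝ)))*hSkey
  intro m hm
  obtain ⟨k, hk | hk⟩ := Nat.even_or_odd' m
  · obtain ⟨n, rfl⟩ : ∃ n, k = n + 1 := ⟨k - 1, by omega⟩
    subst hk
    rw [show 2*(n+1) - 2 = 2*n from by omega, show 2*(n+1) - 1 = 2*n + 1 from by omega,
      hceven (n+1), hceven n, hodd1 n,
      poch_succ a n, poch_succ (a - b + 3/2) n, poch_succ (b - 1/2) n,
      show (((n+1) !) : ℝ) = ((n:ℝ)+1) * (n ! : ℝ) from by push_cast [Nat.factorial_succ]; ring]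
    push_cast
    exact tri _ _ _ _ _ _ _ _ _
      (mul_ne_zero (mul_ne_zero (hn1 n) (hfac n)) (mul_ne_zero (hR n) (hhalf1 n)))
      (mul_ne_zero (hfac n) (hR n))
      (mul_ne_zero (mul_ne_zero (mul_ne_zero hb1 (hfac n)) (hR n)) (hhalf1 n))
      (by ring)
  · obtain ⟨n, rfl⟩ : ∃ n, k = n + 1 := ⟨k - 1, by omega⟩
    subst hk
    rw [show 2*(n+1) + 1 - 2 = 2*n + 1 from by omega,
      show 2*(n+1) + 1 - 1 = 2*(n+1) from by omega,
      hodd1 (n+1), hodd1 n, hceven (n+1),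
      poch_succ a n, poch_succ (a - b + 3/2) n, poch_succ (b - 1/2) n,
      show (((n+1) !) : ℝ) = ((n:ℝ)+1) * (n ! : ℝ) from by push_cast [Nat.factorial_succ]; ring]
    push_cast
    have h3' : b - 1/2 + ((n:ℝ)+1) ≠ 0 := by
      have := hhalf1 (n+1); push_cast at this; convert this using 2
    exact tri _ _ _ _ _ _ _ _ _
      (mul_ne_zero (mul_ne_zero (mul_ne_zero hb1
        (mul_ne_zero (hn1 n) (hfac n))) (mul_ne_zero (hR n) (hhalf1 n))) h3')
      (mul_ne_zero (mul_ne_zero (mul_ne_zero hb1 (hfac n)) (hR n)) (hhalf1 n))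
      (mul_ne_zero (mul_ne_zero (hn1 n) (hfac n)) (mul_ne_zero (hR n) (hhalf1 n)))
      (by ring)
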